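/- Mean-value representation for the GLM score map: let μ: ℝ → ℝ be continuously differentiable with k₁ ≤ μ'(x) ≤ k₂ for all x ∈ ℝ, where 0 < k₁ ≤ 1 and k₂ ≥ 1. Let λ > 0, let a_1, …, a_t ∈ ℝ^d, and define g_t(θ) = λθ + Σ_{s=1}^t μ(⟨θ, a_s⟩) a_s and V_t = λI_d + Σ_{s=1}^t a_s a_s'. Then for any θ₁, θ₂ ∈ ℝ^d there exists a symmetric positive definite d×d matrix G such that k₁V_t ⪯ G ⪯ k₂V_t and g_t(θ₁) − g_t(θ₂) = G(θ₁ − θ₂). -/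

import Mathlib

/-!
By the mean value theorem, for each `s` there is `ξ_s` with
`μ(⟨θ₁, a_s⟩) - μ(⟨θ₂, a_s⟩) = μ'(ξ_s) ⟨a_s, θ₁ - θ₂⟩`, so `G = λI + ∑ μ'(ξ_s) a_s a_s'` satisfies
`g(θ₁) - g(θ₂) = G (θ₁ - θ₂)`. Both `G - k₁V = (1 - k₁)λI + ∑ (μ'(ξ_s) - k₁) a_s a_s'` and
`k₂V - G` are nonnegative combinations of `I` and the rank-one matrices `a_s a_s'`, hence
positive semidefinite.
-/

/-- The dot product of two vectors in `ℝ^d`. -/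
def dotp {d : ℕ} (x y : Fin d → ℝ) : ℝ := ∑ i, x i * y i

/-- The outer product `a a'` of a column vector with itself. -/
def outer {d : ℕ} (x : Fin d → ℝ) : Matrix (Fin d) (Fin d) ℝ := fun i j => x i * x j

open Matrix

theorem exists_sub_eq_mul_sub_of_hasDerivAt {f f' : ℝ → ℝ} (hf : ∀ x, HasDerivAt f (f' x) x)
    (x y : ℝ) : ∃ ξ, f y - f x = f' ξ * (y - x) := by
  wlog hxy : x < y generalizing x y
  · rcases (not_lt.mp hxy).eq_or_lt with hyx | hyx
    · exact ⟨x, by simp [hyx]⟩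
    · obtain ⟨ξ, hξ⟩ := this y x hyx
      exact ⟨ξ, by linarith⟩
  obtain ⟨ξ, -, hξ⟩ := exists_hasDerivAt_eq_slope f f' hxy
    (fun z _ => (hf z).continuousAt.continuousWithinAt) (fun z _ => hf z)
  exact ⟨ξ, by rw [hξ, div_mul_cancel₀ _ (sub_ne_zero.mpr hxy.ne')]⟩

theorem Matrix.IsHermitian.isSymm {n R : Type*} [Star R] [TrivialStar R] {A : Matrix n n R}
    (h : A.IsHermitian) : A.IsSymm := by
  simpa [IsHermitian, IsSymm, conjTranspose_eq_transpose_of_trivial] using h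

section Outer

variable {d : ℕ}

theorem dotp_eq_dotProduct (x y : Fin d → ℝ) : dotp x y = x ⬝ᵥ y := rfl

theorem outer_eq_vecMulVec (x : Fin d → ℝ) : outer x = vecMulVec x x := rfl

theorem posSemidef_outer (x : Fin d → ℝ) : (outer x).PosSemidef :=
  posSemidef_vecMulVec_self_star x

theorem outer_mulVec (x v : Fin d → ℝ) : outer x *ᵥ v = (x ⬝ᵥ v) • x := by
  rw [outer_eq_vecMulVec, vecMulVec_mulVec]
  exact op_smul_eq_smul _ _

end Outer

section WeightedGram

variable {d : ℕ} {α : Type*} (S : Finset α) (a : α → Fin d → ℝ)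

def weightedGram (l : ℝ) (w : α → ℝ) : Matrix (Fin d) (Fin d) ℝ :=
  l • 1 + ∑ s ∈ S, w s • outer (a s)

theorem smul_weightedGram (k l : ℝ) (w : α → ℝ) :
    k • weightedGram S a l w = weightedGram S a (k * l) (k • w) := by
  simp only [weightedGram, smul_add, Finset.smul_sum, smul_smul, Pi.smul_apply, smul_eq_mul]

theorem weightedGram_sub_weightedGram (l l' : ℝ) (w w' : α → ℝ) :
    weightedGram S a l w - weightedGram S a l' w' = weightedGram S a (l - l') (w - w') := by
  simp only [weightedGram, sub_smul, Pi.sub_apply, Finset.sum_sub_distrib]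
  abel

theorem weightedGram_posSemidef {l : ℝ} {w : α → ℝ} (hl : 0 ≤ l) (hw : ∀ s ∈ S, 0 ≤ w s) :
    (weightedGram S a l w).PosSemidef :=
  (PosSemidef.one.smul hl).add <|
    posSemidef_sum S fun s hs => (posSemidef_outer (a s)).smul (hw s hs)

theorem weightedGram_posDef {l : ℝ} {w : α → ℝ} (hl : 0 < l) (hw : ∀ s ∈ S, 0 ≤ w s) :
    (weightedGram S a l w).PosDef :=
  (PosDef.one.smul hl).add_posSemidef <|
    posSemidef_sum S fun s hs => (posSemidef_outer (a s)).smul (hw s hs)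

theorem weightedGram_mulVec (l : ℝ) (w : α → ℝ) (v : Fin d → ℝ) :
    weightedGram S a l w *ᵥ v = l • v + ∑ s ∈ S, (w s * (a s ⬝ᵥ v)) • a s := by
  simp only [weightedGram, add_mulVec, smul_mulVec, one_mulVec, Matrix.sum_mulVec,
    outer_mulVec, smul_smul]

end WeightedGram

theorem stmt_10_general
    (d t : ℕ)
    (μ μ' : ℝ → ℝ)
    (hderiv : ∀ x, HasDerivAt μ (μ' x) x)
    (k₁ k₂ : ℝ) (hk₁0 : 0 < k₁) (hk₁1 : k₁ ≤ 1) (hk₂ : 1 ≤ k₂)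
    (hbounds : ∀ x, k₁ ≤ μ' x ∧ μ' x ≤ k₂)
    (lam : ℝ) (hlam : 0 < lam)
    (a : ℕ → (Fin d → ℝ))
    (g : (Fin d → ℝ) → (Fin d → ℝ))
    (hg : ∀ θ, g θ = lam • θ + ∑ s ∈ Finset.Icc 1 t, μ (dotp θ (a s)) • a s)
    (V : Matrix (Fin d) (Fin d) ℝ)
    (hV : V = lam • (1 : Matrix (Fin d) (Fin d) ℝ) + ∑ s ∈ Finset.Icc 1 t, outer (a s))
    (θ₁ θ₂ : Fin d → ℝ) :
    ∃ G : Matrix (Fin d) (Fin d) ℝ, G.IsSymm ∧ G.PosDef ∧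
      (G - k₁ • V).PosSemidef ∧ (k₂ • V - G).PosSemidef ∧
      g θ₁ - g θ₂ = G.mulVec (θ₁ - θ₂) := by
  set S := Finset.Icc 1 t
  obtain ⟨ξ, hξ⟩ : ∃ ξ : ℕ → ℝ, ∀ s, μ (dotp θ₁ (a s)) - μ (dotp θ₂ (a s)) =
      μ' (ξ s) * (a s ⬝ᵥ (θ₁ - θ₂)) := by
    choose ξ hξ using fun s => exists_sub_eq_mul_sub_of_hasDerivAt hderiv
      (dotp θ₂ (a s)) (dotp θ₁ (a s))
    refine ⟨ξ, fun s => ?_⟩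
    rw [hξ, dotp_eq_dotProduct, dotp_eq_dotProduct, dotProduct_sub, dotProduct_comm θ₁,
      dotProduct_comm θ₂]
  have hVgram : V = weightedGram S a lam 1 := by
    simp only [hV, weightedGram, Pi.one_apply, one_smul]
  have hGpos : (weightedGram S a lam (μ' ∘ ξ)).PosDef :=
    weightedGram_posDef S a hlam fun s _ => hk₁0.le.trans (hbounds _).1
  refine ⟨weightedGram S a lam (μ' ∘ ξ), hGpos.isHermitian.isSymm, hGpos, ?_, ?_, ?_⟩
  · rw [hVgram, smul_weightedGram, weightedGram_sub_weightedGram]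
    exact weightedGram_posSemidef S a (by nlinarith) fun s _ => by simpa using (hbounds (ξ s)).1
  · rw [hVgram, smul_weightedGram, weightedGram_sub_weightedGram]
    exact weightedGram_posSemidef S a (by nlinarith) fun s _ => by simpa using (hbounds (ξ s)).2
  · simp only [hg, weightedGram_mulVec, Function.comp_apply, smul_sub, ← hξ, sub_smul,
      Finset.sum_sub_distrib]
    abel

/-- **Mean-value representation for the GLM score map.** If `μ` is continuously
differentiable with `k₁ ≤ μ' ≤ k₂` everywhere (`0 < k₁ ≤ 1 ≤ k₂`), then for
`g_t(θ) = λθ + ∑_{s=1}^t μ(⟨θ, a_s⟩) a_s` and `V_t = λI + ∑_{s=1}^t a_s a_s'`, and any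
`θ₁, θ₂`, there is a symmetric positive definite matrix `G` with `k₁ V_t ⪯ G ⪯ k₂ V_t`
and `g_t(θ₁) − g_t(θ₂) = G (θ₁ − θ₂)`. -/
theorem stmt_10
    (d t : ℕ)
    (μ μ' : ℝ → ℝ)
    (hderiv : ∀ x, HasDerivAt μ (μ' x) x) (hcont : Continuous μ')
    (k₁ k₂ : ℝ) (hk₁0 : 0 < k₁) (hk₁1 : k₁ ≤ 1) (hk₂ : 1 ≤ k₂)
    (hbounds : ∀ x, k₁ ≤ μ' x ∧ μ' x ≤ k₂)
    (lam : ℝ) (hlam : 0 < lam)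
    (a : ℕ → (Fin d → ℝ))
    (g : (Fin d → ℝ) → (Fin d → ℝ))
    (hg : ∀ θ, g θ = lam • θ + ∑ s ∈ Finset.Icc 1 t, μ (dotp θ (a s)) • a s)
    (V : Matrix (Fin d) (Fin d) ℝ)
    (hV : V = lam • (1 : Matrix (Fin d) (Fin d) ℝ) + ∑ s ∈ Finset.Icc 1 t, outer (a s))
    (θ₁ θ₂ : Fin d → ℝ) :
    ∃ G : Matrix (Fin d) (Fin d) ℝ, G.IsSymm ∧ G.PosDef ∧
      (G - k₁ • V).PosSemidef ∧ (k₂ • V - G).PosSemidef ∧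
      g θ₁ - g θ₂ = G.mulVec (θ₁ - θ₂) :=
  stmt_10_general d t μ μ' hderiv k₁ k₂ hk₁0 hk₁1 hk₂ hbounds lam hlam a g hg V hV θ₁ θ₂
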